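/- For every n ≥ 1, the semi-open network 𝒫ⁿ_{{E,F}⇌0}, obtained from the sequential n-site phosphorylation–dephosphorylation cycle 𝒫ⁿ by adding the inflow and outflow reactions 0⇌E and 0⇌F for both enzymes, is monostationary with mass action kinetics: for every choice of reaction rates there is at most one positive steady state in each stoichiometric compatibility class. -/
import Mathlib


/-- A reaction `y → y'` is a pair of complexes, each a vector of
nonnegative integer coefficients indexed by the species: the source and the target. -/
abbrev Reaction (S : Type) : Type := (S → ℕ) × (S → ℕ)

section General

variable {S : Type} [Fintype S] [DecidableEq S]

/-- The complex consisting of a single copy of species `s`. -/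
def unitC (s : S) : S → ℕ := fun t => if t = s then 1 else 0

/-- The complex `a + b`. -/
def pairC (a b : S) : S → ℕ := fun t => (if t = a then 1 else 0) + (if t = b then 1 else 0)

/-- The mass action right-hand side `f_κ` of a network `R` with rates `κ`. -/
def massAction (R : Finset (Reaction S)) (κ : Reaction S → ℝ) (x : S → ℝ) : S → ℝ :=
  fun s => ∑ r ∈ R, κ r * (∏ t, x t ^ r.1 t) * ((r.2 s : ℝ) - (r.1 s : ℝ))

/-- The stoichiometric subspace of a network: the span of its reaction vectors. -/
def stoichSubspace (R : Finset (Reaction S)) : Submodule ℝ (S → ℝ) :=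
  Submodule.span ℝ ((fun r : Reaction S => fun s => ((r.2 s : ℝ) - (r.1 s : ℝ))) '' ↑R)

/-- A positive steady state of the mass action system `(R, κ)`. -/
def isPosSteadyState (R : Finset (Reaction S)) (κ : Reaction S → ℝ) (x : S → ℝ) : Prop :=
  (∀ s, 0 < x s) ∧ massAction R κ x = 0

/-- A steady state is nondegenerate if the kernel of the Jacobian of the mass action
right-hand side intersects the stoichiometric subspace trivially. -/
def nondegenerate (R : Finset (Reaction S)) (κ : Reaction S → ℝ) (x : S → ℝ) : Prop :=
  ∀ v ∈ stoichSubspace R, fderiv ℝ (massAction R κ) x v = 0 → v = 0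

/-- A network admits nondegenerate multistationarity if for some positive rates there are
two distinct nondegenerate positive steady states in the same stoichiometric
compatibility class. -/
def admitsNondegMultistationarity (R : Finset (Reaction S)) : Prop :=
  ∃ κ : Reaction S → ℝ, (∀ r ∈ R, 0 < κ r) ∧
    ∃ x y : S → ℝ, x ≠ y ∧
      isPosSteadyState R κ x ∧ isPosSteadyState R κ y ∧
      nondegenerate R κ x ∧ nondegenerate R κ y ∧
      y - x ∈ stoichSubspace R

/-- The inflow reaction `0 → s`. -/
def inflow (s : S) : Reaction S := (fun _ => 0, unitC s)

/-- The outflow reaction `s → 0`. -/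
def outflow (s : S) : Reaction S := (unitC s, fun _ => 0)

/-- The open network on `E`: add inflow and outflow reactions for every species of `E`. -/
def openOn (R : Finset (Reaction S)) (E : Finset S) : Finset (Reaction S) :=
  R ∪ E.image inflow ∪ E.image outflow

/-- A conservation law: a vector orthogonal to the stoichiometric subspace. -/
def conservationLaw (R : Finset (Reaction S)) (w : S → ℝ) : Prop :=
  ∀ v ∈ stoichSubspace R, ∑ s, w s * v s = 0

/-- A set `E` of species is independently conserved in `R` if there are conservation laws
`L e` for `e ∈ E` such that `L e` has a nonzero coordinate at `e` and zero coordinate at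
`e` for every other `L e'`, `e' ∈ E`. -/
def IndepConserved (R : Finset (Reaction S)) (E : Finset S) : Prop :=
  ∃ L : S → (S → ℝ), ∀ e ∈ E,
    conservationLaw R (L e) ∧ L e e ≠ 0 ∧ ∀ e' ∈ E, e' ≠ e → L e' e = 0

/-- A species is closed in `R` if neither its inflow nor its outflow is a reaction of `R`. -/
def ClosedIn (R : Finset (Reaction S)) (s : S) : Prop :=
  inflow s ∉ R ∧ outflow s ∉ R

/-- Projection of a complex onto the coordinates outside `E`. -/
def projC (E : Finset S) (y : S → ℕ) : {s : S // s ∉ E} → ℕ := fun s => y s.val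

/-- Projection of a reaction onto the coordinates outside `E`. -/
def projR (E : Finset S) (r : Reaction S) : Reaction {s : S // s ∉ E} :=
  (projC E r.1, projC E r.2)

/-- The projected network `G₋E` on the species outside `E`: project all reactions and
remove self-loops. -/
def projNet (R : Finset (Reaction S)) (E : Finset S) : Finset (Reaction {s : S // s ∉ E}) :=
  (R.image (projR E)).filter fun r => r.1 ≠ r.2

/-- Inclusion of a reaction on the species of `E` into a reaction on all of `S`. -/
def inclR (E : Finset S) (r : Reaction {s : S // s ∈ E}) : Reaction S :=
  (fun s => if h : s ∈ E then r.1 ⟨s, h⟩ else 0,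
   fun s => if h : s ∈ E then r.2 ⟨s, h⟩ else 0)

/-- `R` has at most `l` positive steady states in each stoichiometric compatibility class,
for every choice of positive reaction rates: there is no injective family of `l + 1`
positive steady states lying pairwise in the same compatibility class. -/
def atMostPosSS (R : Finset (Reaction S)) (l : ℕ) : Prop :=
  ∀ κ : Reaction S → ℝ, (∀ r ∈ R, 0 < κ r) →
    ∀ f : Fin (l + 1) → (S → ℝ),
      (∀ j, isPosSteadyState R κ (f j)) →
      (∀ j k, f k - f j ∈ stoichSubspace R) →
      ¬ Function.Injective f

/-- Monostationarity: at most one positive steady state in each stoichiometric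
compatibility class, for every choice of positive rates. -/
def monostationary (R : Finset (Reaction S)) : Prop :=
  atMostPosSS R 1

end General

/-- Species of the sequential `n`-site phosphorylation–dephosphorylation cycle:
the enzymes `E`, `F`, the substrates `S i` for `i = 0, …, n`, and the intermediates
`ES i` for `i = 0, …, n-1` and `FS i` (denoting `FS_{i+1}`) for `i = 0, …, n-1`. -/
inductive PS (n : ℕ) : Type
  | E : PS n
  | F : PS n
  | S : Fin (n + 1) → PS n
  | ES : Fin n → PS n
  | FS : Fin n → PS n
deriving DecidableEq, Fintype

/-- The sequential `n`-site phosphorylation–dephosphorylation cycle `𝒫ⁿ`, with the `6n`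
reactions `S_i + E ⇌ ES_i`, `ES_i → S_{i+1} + E` for `i = 0, …, n-1` and
`S_i + F ⇌ FS_i`, `FS_i → S_{i-1} + F` for `i = 1, …, n`. -/
def Pcycle (n : ℕ) : Finset (Reaction (PS n)) :=
  (Finset.univ.image fun i : Fin n => (pairC (PS.S i.castSucc) PS.E, unitC (PS.ES i))) ∪
  (Finset.univ.image fun i : Fin n => (unitC (PS.ES i), pairC (PS.S i.castSucc) PS.E)) ∪
  (Finset.univ.image fun i : Fin n => (unitC (PS.ES i), pairC (PS.S i.succ) PS.E)) ∪
  (Finset.univ.image fun i : Fin n => (pairC (PS.S i.succ) PS.F, unitC (PS.FS i))) ∪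
  (Finset.univ.image fun i : Fin n => (unitC (PS.FS i), pairC (PS.S i.succ) PS.F)) ∪
  (Finset.univ.image fun i : Fin n => (unitC (PS.FS i), pairC (PS.S i.castSucc) PS.F))

namespace PhosAux

section Gen
variable {S : Type} [Fintype S] [DecidableEq S]

lemma dot_unitC (c : S → ℝ) (a : S) : ∑ s, c s * ((unitC a s : ℝ)) = c a := by
  simp [unitC]
lemma dot_pairC (c : S → ℝ) (a b : S) : ∑ s, c s * ((pairC a b s : ℝ)) = c a + c b := by
  simp [pairC, mul_add, Finset.sum_add_distrib]
lemma prod_pow_unitC (x : S → ℝ) (a : S) : (∏ t, x t ^ unitC a t) = x a := by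
  simp [unitC, pow_ite]
lemma prod_pow_pairC (x : S → ℝ) (a b : S) :
    (∏ t, x t ^ pairC a b t) = x a * x b := by
  simp only [pairC, pow_add]
  rw [Finset.prod_mul_distrib]
  simp [pow_ite]
def pairφ (c : S → ℝ) (r : Reaction S) : ℝ := ∑ s, c s * ((r.2 s : ℝ) - (r.1 s : ℝ))
lemma dot_massAction (R : Finset (Reaction S)) (κ : Reaction S → ℝ) (x : S → ℝ) (c : S → ℝ) :
    ∑ s, c s * massAction R κ x s = ∑ r ∈ R, κ r * (∏ t, x t ^ r.1 t) * pairφ c r := by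
  unfold massAction pairφ
  simp_rw [Finset.mul_sum]
  rw [Finset.sum_comm]
  congr 1; ext r
  congr 1; ext s; ring
lemma pairφ_eq (c : S → ℝ) (r : Reaction S) :
    pairφ c r = (∑ s, c s * ((r.2 s : ℝ))) - ∑ s, c s * ((r.1 s : ℝ)) := by
  unfold pairφ
  rw [← Finset.sum_sub_distrib]
  congr 1; ext s; ring


lemma tot_unitC (a : S) : ∑ s, unitC a s = 1 := by simp [unitC]
lemma tot_pairC (a b : S) : ∑ s, pairC a b s = 2 := by simp [pairC, Finset.sum_add_distrib]
lemma unitC_inj {a b : S} (h : unitC a = unitC b) : a = b := by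
  have := congrFun h a
  simp [unitC] at this
  by_contra hne
  simp [hne] at this
lemma unitC_ne_pairC (a b c : S) : unitC a ≠ pairC b c := by
  intro h
  have := congrArg (fun y => ∑ s, y s) h
  simp [tot_unitC, tot_pairC] at this
lemma zero_ne_unitC (a : S) : (fun _ : S => (0:ℕ)) ≠ unitC a := by
  intro h
  have := congrArg (fun y => ∑ s, y s) h
  simp [tot_unitC] at this
lemma zero_ne_pairC (a b : S) : (fun _ : S => (0:ℕ)) ≠ pairC a b := by
  intro h
  have := congrArg (fun y => ∑ s, y s) h
  simp [tot_pairC] at this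
lemma pairC_left_inj {a b c : S} (ha : a ≠ c) (hb : b ≠ c) (h : pairC a c = pairC b c) :
    a = b := by
  have := congrFun h a
  simp [pairC, ha, hb] at this
  by_contra hne
  simp [hne] at this

end Gen

variable {n : ℕ}

def fam1 (i : Fin n) : Reaction (PS n) := (pairC (PS.S i.castSucc) PS.E, unitC (PS.ES i))
def fam2 (i : Fin n) : Reaction (PS n) := (unitC (PS.ES i), pairC (PS.S i.castSucc) PS.E)
def fam3 (i : Fin n) : Reaction (PS n) := (unitC (PS.ES i), pairC (PS.S i.succ) PS.E)
def fam4 (i : Fin n) : Reaction (PS n) := (pairC (PS.S i.succ) PS.F, unitC (PS.FS i))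
def fam5 (i : Fin n) : Reaction (PS n) := (unitC (PS.FS i), pairC (PS.S i.succ) PS.F)
def fam6 (i : Fin n) : Reaction (PS n) := (unitC (PS.FS i), pairC (PS.S i.castSucc) PS.F)

def net (n : ℕ) : Finset (Reaction (PS n)) := openOn (Pcycle n) {PS.E, PS.F}

lemma net_eq : net n =
    ((((((Finset.univ.image (fam1 (n := n)) ∪ Finset.univ.image fam2) ∪ Finset.univ.image fam3)
      ∪ Finset.univ.image fam4) ∪ Finset.univ.image fam5) ∪ Finset.univ.image fam6)
      ∪ {inflow PS.E, inflow PS.F}) ∪ {outflow PS.E, outflow PS.F} := by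
  simp only [net, openOn, Pcycle, fam1, fam2, fam3, fam4, fam5, fam6,
    Finset.image_insert, Finset.image_singleton]
  rfl

lemma fam1_inj : Function.Injective (fam1 (n := n)) := by
  intro a b h
  have := unitC_inj (congrArg Prod.snd h)
  simpa using this
lemma fam2_inj : Function.Injective (fam2 (n := n)) := by
  intro a b h
  have := unitC_inj (congrArg Prod.fst h)
  simpa using this
lemma fam3_inj : Function.Injective (fam3 (n := n)) := by
  intro a b h
  have := unitC_inj (congrArg Prod.fst h)
  simpa using this
lemma fam4_inj : Function.Injective (fam4 (n := n)) := by
  intro a b h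
  have := unitC_inj (congrArg Prod.snd h)
  simpa using this
lemma fam5_inj : Function.Injective (fam5 (n := n)) := by
  intro a b h
  have := unitC_inj (congrArg Prod.fst h)
  simpa using this
lemma fam6_inj : Function.Injective (fam6 (n := n)) := by
  intro a b h
  have := unitC_inj (congrArg Prod.fst h)
  simpa using this


lemma ne12 (i j : Fin n) : fam1 i ≠ fam2 j := by
  intro h
  simp only [fam1, fam2, Prod.mk.injEq] at h
  exact unitC_ne_pairC _ _ _ h.2
lemma ne13 (i j : Fin n) : fam1 i ≠ fam3 j := by
  intro h
  simp only [fam1, fam3, Prod.mk.injEq] at h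
  exact unitC_ne_pairC _ _ _ h.2
lemma ne14 (i j : Fin n) : fam1 i ≠ fam4 j := fun h => by
  have := unitC_inj (congrArg Prod.snd h); simp at this
lemma ne15 (i j : Fin n) : fam1 i ≠ fam5 j := by
  intro h
  simp only [fam1, fam5, Prod.mk.injEq] at h
  exact unitC_ne_pairC _ _ _ h.2
lemma ne16 (i j : Fin n) : fam1 i ≠ fam6 j := by
  intro h
  simp only [fam1, fam6, Prod.mk.injEq] at h
  exact unitC_ne_pairC _ _ _ h.2
lemma ne23 (i j : Fin n) : fam2 i ≠ fam3 j := fun h => by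
  have h1 := unitC_inj (congrArg Prod.fst h)
  have h2 := pairC_left_inj (by simp) (by simp) (congrArg Prod.snd h)
  simp at h1 h2
  subst h1
  have := congrArg Fin.val h2
  simp at this
lemma ne24 (i j : Fin n) : fam2 i ≠ fam4 j := fun h =>
  unitC_ne_pairC _ _ _ (congrArg Prod.fst h)
lemma ne25 (i j : Fin n) : fam2 i ≠ fam5 j := fun h => by
  have := unitC_inj (congrArg Prod.fst h); simp at this
lemma ne26 (i j : Fin n) : fam2 i ≠ fam6 j := fun h => by
  have := unitC_inj (congrArg Prod.fst h); simp at this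
lemma ne34 (i j : Fin n) : fam3 i ≠ fam4 j := fun h =>
  unitC_ne_pairC _ _ _ (congrArg Prod.fst h)
lemma ne35 (i j : Fin n) : fam3 i ≠ fam5 j := fun h => by
  have := unitC_inj (congrArg Prod.fst h); simp at this
lemma ne36 (i j : Fin n) : fam3 i ≠ fam6 j := fun h => by
  have := unitC_inj (congrArg Prod.fst h); simp at this
lemma ne45 (i j : Fin n) : fam4 i ≠ fam5 j := by
  intro h
  simp only [fam4, fam5, Prod.mk.injEq] at h
  exact unitC_ne_pairC _ _ _ h.2
lemma ne46 (i j : Fin n) : fam4 i ≠ fam6 j := by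
  intro h
  simp only [fam4, fam6, Prod.mk.injEq] at h
  exact unitC_ne_pairC _ _ _ h.2
lemma ne56 (i j : Fin n) : fam5 i ≠ fam6 j := fun h => by
  have h1 := unitC_inj (congrArg Prod.fst h)
  have h2 := pairC_left_inj (by simp) (by simp) (congrArg Prod.snd h)
  simp at h1 h2
  subst h1
  have := congrArg Fin.val h2
  simp at this
lemma nein1 (s : PS n) (i : Fin n) : inflow s ≠ fam1 i := fun h =>
  zero_ne_pairC _ _ (congrArg Prod.fst h)
lemma nein2 (s : PS n) (i : Fin n) : inflow s ≠ fam2 i := fun h =>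
  zero_ne_unitC _ (congrArg Prod.fst h)
lemma nein3 (s : PS n) (i : Fin n) : inflow s ≠ fam3 i := fun h =>
  zero_ne_unitC _ (congrArg Prod.fst h)
lemma nein4 (s : PS n) (i : Fin n) : inflow s ≠ fam4 i := fun h =>
  zero_ne_pairC _ _ (congrArg Prod.fst h)
lemma nein5 (s : PS n) (i : Fin n) : inflow s ≠ fam5 i := fun h =>
  zero_ne_unitC _ (congrArg Prod.fst h)
lemma nein6 (s : PS n) (i : Fin n) : inflow s ≠ fam6 i := fun h =>
  zero_ne_unitC _ (congrArg Prod.fst h)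
lemma neout1 (s : PS n) (i : Fin n) : outflow s ≠ fam1 i := fun h =>
  zero_ne_unitC _ (congrArg Prod.snd h)
lemma neout2 (s : PS n) (i : Fin n) : outflow s ≠ fam2 i := fun h =>
  zero_ne_pairC _ _ (congrArg Prod.snd h)
lemma neout3 (s : PS n) (i : Fin n) : outflow s ≠ fam3 i := fun h =>
  zero_ne_pairC _ _ (congrArg Prod.snd h)
lemma neout4 (s : PS n) (i : Fin n) : outflow s ≠ fam4 i := fun h =>
  zero_ne_unitC _ (congrArg Prod.snd h)
lemma neout5 (s : PS n) (i : Fin n) : outflow s ≠ fam5 i := fun h =>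
  zero_ne_pairC _ _ (congrArg Prod.snd h)
lemma neout6 (s : PS n) (i : Fin n) : outflow s ≠ fam6 i := fun h =>
  zero_ne_pairC _ _ (congrArg Prod.snd h)
lemma nein_out (s t : PS n) : inflow s ≠ outflow t := fun h =>
  zero_ne_unitC _ (congrArg Prod.fst h)
lemma inflow_inj' {s t : PS n} (h : inflow s = inflow t) : s = t :=
  unitC_inj (congrArg Prod.snd h)
lemma outflow_inj' {s t : PS n} (h : outflow s = outflow t) : s = t :=
  unitC_inj (congrArg Prod.fst h)

lemma sum_net (g : Reaction (PS n) → ℝ) :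
    ∑ r ∈ net n, g r =
      (∑ i, g (fam1 i)) + (∑ i, g (fam2 i)) + (∑ i, g (fam3 i)) +
      (∑ i, g (fam4 i)) + (∑ i, g (fam5 i)) + (∑ i, g (fam6 i)) +
      g (inflow PS.E) + g (inflow PS.F) + g (outflow PS.E) + g (outflow PS.F) := by
  classical
  have dimg : ∀ {f h : Fin n → Reaction (PS n)}, (∀ a b, f a ≠ h b) →
      Disjoint (Finset.univ.image f) (Finset.univ.image h) := by
    intro f h hne
    simp only [Finset.disjoint_left, Finset.mem_image]
    rintro r ⟨a, -, rfl⟩ ⟨b, -, hb⟩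
    exact hne a b hb.symm
  have dpair : ∀ {f : Fin n → Reaction (PS n)} {x y : Reaction (PS n)},
      (∀ a, f a ≠ x) → (∀ a, f a ≠ y) →
      Disjoint (Finset.univ.image f) ({x, y} : Finset (Reaction (PS n))) := by
    intro f x y hx hy
    simp only [Finset.disjoint_left, Finset.mem_image, Finset.mem_insert, Finset.mem_singleton]
    rintro r ⟨a, -, rfl⟩ (h | h)
    · exact hx a h
    · exact hy a h
  have h2 : Disjoint (Finset.univ.image (fam1 (n := n))) (Finset.univ.image fam2) :=
    dimg ne12
  have h3 : Disjoint (Finset.univ.image (fam1 (n := n)) ∪ Finset.univ.image fam2)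
      (Finset.univ.image fam3) := by
    rw [Finset.disjoint_union_left]; exact ⟨dimg ne13, dimg ne23⟩
  have h4 : Disjoint ((Finset.univ.image (fam1 (n := n)) ∪ Finset.univ.image fam2)
      ∪ Finset.univ.image fam3) (Finset.univ.image fam4) := by
    rw [Finset.disjoint_union_left, Finset.disjoint_union_left]
    exact ⟨⟨dimg ne14, dimg ne24⟩, dimg ne34⟩
  have h5 : Disjoint (((Finset.univ.image (fam1 (n := n)) ∪ Finset.univ.image fam2)
      ∪ Finset.univ.image fam3) ∪ Finset.univ.image fam4) (Finset.univ.image fam5) := by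
    rw [Finset.disjoint_union_left, Finset.disjoint_union_left, Finset.disjoint_union_left]
    exact ⟨⟨⟨dimg ne15, dimg ne25⟩, dimg ne35⟩, dimg ne45⟩
  have h6 : Disjoint ((((Finset.univ.image (fam1 (n := n)) ∪ Finset.univ.image fam2)
      ∪ Finset.univ.image fam3) ∪ Finset.univ.image fam4) ∪ Finset.univ.image fam5)
      (Finset.univ.image fam6) := by
    rw [Finset.disjoint_union_left, Finset.disjoint_union_left, Finset.disjoint_union_left,
      Finset.disjoint_union_left]
    exact ⟨⟨⟨⟨dimg ne16, dimg ne26⟩, dimg ne36⟩, dimg ne46⟩, dimg ne56⟩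
  have hIn : Disjoint (((((Finset.univ.image (fam1 (n := n)) ∪ Finset.univ.image fam2)
      ∪ Finset.univ.image fam3) ∪ Finset.univ.image fam4) ∪ Finset.univ.image fam5)
      ∪ Finset.univ.image fam6) ({inflow PS.E, inflow PS.F} : Finset (Reaction (PS n))) := by
    rw [Finset.disjoint_union_left, Finset.disjoint_union_left, Finset.disjoint_union_left,
      Finset.disjoint_union_left, Finset.disjoint_union_left]
    exact ⟨⟨⟨⟨⟨dpair (fun a => (nein1 _ a).symm) (fun a => (nein1 _ a).symm),
      dpair (fun a => (nein2 _ a).symm) (fun a => (nein2 _ a).symm)⟩,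
      dpair (fun a => (nein3 _ a).symm) (fun a => (nein3 _ a).symm)⟩,
      dpair (fun a => (nein4 _ a).symm) (fun a => (nein4 _ a).symm)⟩,
      dpair (fun a => (nein5 _ a).symm) (fun a => (nein5 _ a).symm)⟩,
      dpair (fun a => (nein6 _ a).symm) (fun a => (nein6 _ a).symm)⟩
  have hOut : Disjoint ((((((Finset.univ.image (fam1 (n := n)) ∪ Finset.univ.image fam2)
      ∪ Finset.univ.image fam3) ∪ Finset.univ.image fam4) ∪ Finset.univ.image fam5)
      ∪ Finset.univ.image fam6) ∪ ({inflow PS.E, inflow PS.F} : Finset (Reaction (PS n))))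
      ({outflow PS.E, outflow PS.F} : Finset (Reaction (PS n))) := by
    rw [Finset.disjoint_union_left, Finset.disjoint_union_left, Finset.disjoint_union_left,
      Finset.disjoint_union_left, Finset.disjoint_union_left, Finset.disjoint_union_left]
    refine ⟨⟨⟨⟨⟨⟨dpair (fun a => (neout1 _ a).symm) (fun a => (neout1 _ a).symm),
      dpair (fun a => (neout2 _ a).symm) (fun a => (neout2 _ a).symm)⟩,
      dpair (fun a => (neout3 _ a).symm) (fun a => (neout3 _ a).symm)⟩,
      dpair (fun a => (neout4 _ a).symm) (fun a => (neout4 _ a).symm)⟩,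
      dpair (fun a => (neout5 _ a).symm) (fun a => (neout5 _ a).symm)⟩,
      dpair (fun a => (neout6 _ a).symm) (fun a => (neout6 _ a).symm)⟩, ?_⟩
    simp only [Finset.disjoint_left, Finset.mem_insert, Finset.mem_singleton]
    rintro r (rfl | rfl) (h | h) <;> exact nein_out _ _ h
  have hinEF : (inflow (PS.E : PS n)) ≠ inflow PS.F := by
    intro h; have := inflow_inj' h; simp at this
  have houtEF : (outflow (PS.E : PS n)) ≠ outflow PS.F := by
    intro h; have := outflow_inj' h; simp at this
  rw [net_eq, Finset.sum_union hOut, Finset.sum_union hIn, Finset.sum_union h6,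
    Finset.sum_union h5, Finset.sum_union h4, Finset.sum_union h3, Finset.sum_union h2,
    Finset.sum_pair hinEF, Finset.sum_pair houtEF,
    Finset.sum_image (fun a _ b _ h => fam1_inj h), Finset.sum_image (fun a _ b _ h => fam2_inj h),
    Finset.sum_image (fun a _ b _ h => fam3_inj h), Finset.sum_image (fun a _ b _ h => fam4_inj h),
    Finset.sum_image (fun a _ b _ h => fam5_inj h), Finset.sum_image (fun a _ b _ h => fam6_inj h)]
  ring

lemma master (κ : Reaction (PS n) → ℝ) (x : PS n → ℝ)
    (hx : massAction (net n) κ x = 0) (c : PS n → ℝ) :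
    (∑ i, κ (fam1 i) * (x (PS.S i.castSucc) * x PS.E) *
        (c (PS.ES i) - (c (PS.S i.castSucc) + c PS.E)))
  + (∑ i, κ (fam2 i) * x (PS.ES i) * ((c (PS.S i.castSucc) + c PS.E) - c (PS.ES i)))
  + (∑ i, κ (fam3 i) * x (PS.ES i) * ((c (PS.S i.succ) + c PS.E) - c (PS.ES i)))
  + (∑ i, κ (fam4 i) * (x (PS.S i.succ) * x PS.F) * (c (PS.FS i) - (c (PS.S i.succ) + c PS.F)))
  + (∑ i, κ (fam5 i) * x (PS.FS i) * ((c (PS.S i.succ) + c PS.F) - c (PS.FS i)))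
  + (∑ i, κ (fam6 i) * x (PS.FS i) * ((c (PS.S i.castSucc) + c PS.F) - c (PS.FS i)))
  + κ (inflow PS.E) * (c PS.E) + κ (inflow PS.F) * (c PS.F)
  - κ (outflow PS.E) * x PS.E * (c PS.E) - κ (outflow PS.F) * x PS.F * (c PS.F) = 0 := by
  have h0 : ∑ s, c s * massAction (net n) κ x s = 0 := by simp [hx]
  rw [dot_massAction] at h0
  rw [sum_net (fun r => κ r * (∏ t, x t ^ r.1 t) * pairφ c r)] at h0
  simp only [fam1, fam2, fam3, fam4, fam5, fam6, inflow, outflow, pairφ_eq,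
    dot_unitC, dot_pairC, prod_pow_unitC, prod_pow_pairC, Nat.cast_zero, mul_zero,
    Finset.sum_const_zero, pow_zero, Finset.prod_const_one] at h0 ⊢
  linear_combination h0

lemma eqE (κ : Reaction (PS n) → ℝ) (x : PS n → ℝ) (hx : massAction (net n) κ x = 0) :
    κ (inflow PS.E) = κ (outflow PS.E) * x PS.E := by
  have h := master κ x hx (fun s => match s with
    | PS.E => 1 | PS.ES _ => 1 | _ => 0)
  simp at h
  linarith

lemma eqF (κ : Reaction (PS n) → ℝ) (x : PS n → ℝ) (hx : massAction (net n) κ x = 0) :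
    κ (inflow PS.F) = κ (outflow PS.F) * x PS.F := by
  have h := master κ x hx (fun s => match s with
    | PS.F => 1 | PS.FS _ => 1 | _ => 0)
  simp at h
  linarith

lemma eqES (κ : Reaction (PS n) → ℝ) (x : PS n → ℝ) (hx : massAction (net n) κ x = 0)
    (j : Fin n) :
    κ (fam1 j) * (x (PS.S j.castSucc) * x PS.E) = (κ (fam2 j) + κ (fam3 j)) * x (PS.ES j) := by
  have h := master κ x hx (fun s => match s with
    | PS.ES i => if i = j then (1:ℝ) else 0 | _ => 0)
  simp only [zero_add, add_zero, sub_zero, zero_sub, mul_ite, mul_one, mul_zero, mul_neg,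
    Finset.sum_ite_eq', Finset.mem_univ, if_true, Finset.sum_neg_distrib,
    Finset.sum_const_zero] at h
  linear_combination h

lemma eqFS (κ : Reaction (PS n) → ℝ) (x : PS n → ℝ) (hx : massAction (net n) κ x = 0)
    (j : Fin n) :
    κ (fam4 j) * (x (PS.S j.succ) * x PS.F) = (κ (fam5 j) + κ (fam6 j)) * x (PS.FS j) := by
  have h := master κ x hx (fun s => match s with
    | PS.FS i => if i = j then (1:ℝ) else 0 | _ => 0)
  simp only [zero_add, add_zero, sub_zero, zero_sub, mul_ite, mul_one, mul_zero, mul_neg,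
    Finset.sum_ite_eq', Finset.mem_univ, if_true, Finset.sum_neg_distrib,
    Finset.sum_const_zero] at h
  linear_combination h

lemma eqflux (κ : Reaction (PS n) → ℝ) (x : PS n → ℝ) (hx : massAction (net n) κ x = 0)
    (j : Fin n) :
    κ (fam6 j) * x (PS.FS j) = κ (fam3 j) * x (PS.ES j) := by
  have h := master κ x hx (fun s => match s with
    | PS.S k => if (k : ℕ) ≤ (j : ℕ) then (1:ℝ) else 0
    | PS.ES i => if (i : ℕ) ≤ (j : ℕ) then (1:ℝ) else 0
    | PS.FS i => if (i : ℕ) < (j : ℕ) then (1:ℝ) else 0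
    | _ => 0)
  simp only [Fin.coe_castSucc, Fin.val_succ] at h
  have k1 : ∀ i : Fin n, (if (i:ℕ) ≤ (j:ℕ) then (1:ℝ) else 0) -
      ((if (i:ℕ) ≤ (j:ℕ) then (1:ℝ) else 0) + 0) = 0 := by
    intro i; split_ifs <;> ring
  have k2 : ∀ i : Fin n, ((if (i:ℕ) ≤ (j:ℕ) then (1:ℝ) else 0) + 0) -
      (if (i:ℕ) ≤ (j:ℕ) then (1:ℝ) else 0) = 0 := by
    intro i; split_ifs <;> ring
  have k3 : ∀ i : Fin n, ((if (i:ℕ) + 1 ≤ (j:ℕ) then (1:ℝ) else 0) + 0) -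
      (if (i:ℕ) ≤ (j:ℕ) then (1:ℝ) else 0) = if i = j then (-1:ℝ) else 0 := by
    intro i
    rcases eq_or_ne i j with rfl | hne
    · simp only [if_pos rfl]
      split_ifs
      all_goals try ring
      all_goals exfalso
      all_goals omega
    · have hvne : (i:ℕ) ≠ (j:ℕ) := fun hc => hne (Fin.ext hc)
      simp only [if_neg hne]
      split_ifs
      all_goals try ring
      all_goals exfalso
      all_goals omega
  have k4 : ∀ i : Fin n, (if (i:ℕ) < (j:ℕ) then (1:ℝ) else 0) -
      ((if (i:ℕ) + 1 ≤ (j:ℕ) then (1:ℝ) else 0) + 0) = 0 := by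
    intro i
    split_ifs
    all_goals try ring
    all_goals exfalso
    all_goals omega
  have k5 : ∀ i : Fin n, ((if (i:ℕ) + 1 ≤ (j:ℕ) then (1:ℝ) else 0) + 0) -
      (if (i:ℕ) < (j:ℕ) then (1:ℝ) else 0) = 0 := by
    intro i
    split_ifs
    all_goals try ring
    all_goals exfalso
    all_goals omega
  have k6 : ∀ i : Fin n, ((if (i:ℕ) ≤ (j:ℕ) then (1:ℝ) else 0) + 0) -
      (if (i:ℕ) < (j:ℕ) then (1:ℝ) else 0) = if i = j then (1:ℝ) else 0 := by
    intro i
    rcases eq_or_ne i j with rfl | hne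
    · simp only [if_pos rfl]
      split_ifs
      all_goals try ring
      all_goals exfalso
      all_goals omega
    · have hvne : (i:ℕ) ≠ (j:ℕ) := fun hc => hne (Fin.ext hc)
      simp only [if_neg hne]
      split_ifs
      all_goals try ring
      all_goals exfalso
      all_goals omega
  simp only [k1, k2, k3, k4, k5, k6, mul_zero, Finset.sum_const_zero, mul_ite, mul_one,
    mul_neg_one, mul_neg, Finset.sum_ite_eq', Finset.mem_univ, if_true] at h
  linear_combination h

lemma mem1 (i : Fin n) : fam1 i ∈ net n := by
  rw [net_eq]
  exact Finset.mem_union_left _ (Finset.mem_union_left _ (Finset.mem_union_left _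
    (Finset.mem_union_left _ (Finset.mem_union_left _ (Finset.mem_union_left _
    (Finset.mem_union_left _ (Finset.mem_image_of_mem _ (Finset.mem_univ i))))))))
lemma mem2 (i : Fin n) : fam2 i ∈ net n := by
  rw [net_eq]
  exact Finset.mem_union_left _ (Finset.mem_union_left _ (Finset.mem_union_left _
    (Finset.mem_union_left _ (Finset.mem_union_left _ (Finset.mem_union_left _
    (Finset.mem_union_right _ (Finset.mem_image_of_mem _ (Finset.mem_univ i))))))))
lemma mem3 (i : Fin n) : fam3 i ∈ net n := by
  rw [net_eq]
  exact Finset.mem_union_left _ (Finset.mem_union_left _ (Finset.mem_union_left _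
    (Finset.mem_union_left _ (Finset.mem_union_left _
    (Finset.mem_union_right _ (Finset.mem_image_of_mem _ (Finset.mem_univ i)))))))
lemma mem4 (i : Fin n) : fam4 i ∈ net n := by
  rw [net_eq]
  exact Finset.mem_union_left _ (Finset.mem_union_left _ (Finset.mem_union_left _
    (Finset.mem_union_left _
    (Finset.mem_union_right _ (Finset.mem_image_of_mem _ (Finset.mem_univ i))))))
lemma mem5 (i : Fin n) : fam5 i ∈ net n := by
  rw [net_eq]
  exact Finset.mem_union_left _ (Finset.mem_union_left _ (Finset.mem_union_left _
    (Finset.mem_union_right _ (Finset.mem_image_of_mem _ (Finset.mem_univ i)))))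
lemma mem6 (i : Fin n) : fam6 i ∈ net n := by
  rw [net_eq]
  exact Finset.mem_union_left _ (Finset.mem_union_left _
    (Finset.mem_union_right _ (Finset.mem_image_of_mem _ (Finset.mem_univ i))))
lemma memInE : inflow (PS.E : PS n) ∈ net n := by
  rw [net_eq]
  exact Finset.mem_union_left _ (Finset.mem_union_right _ (Finset.mem_insert_self _ _))
lemma memInF : inflow (PS.F : PS n) ∈ net n := by
  rw [net_eq]
  exact Finset.mem_union_left _ (Finset.mem_union_right _
    (Finset.mem_insert_of_mem (Finset.mem_singleton_self _)))
lemma memOutE : outflow (PS.E : PS n) ∈ net n := by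
  rw [net_eq]
  exact Finset.mem_union_right _ (Finset.mem_insert_self _ _)
lemma memOutF : outflow (PS.F : PS n) ∈ net n := by
  rw [net_eq]
  exact Finset.mem_union_right _ (Finset.mem_insert_of_mem (Finset.mem_singleton_self _))

def wfun (n : ℕ) : PS n → ℝ := fun s => match s with
  | PS.E => 0 | PS.F => 0 | _ => 1

lemma conserve (v : PS n → ℝ) (hv : v ∈ stoichSubspace (net n)) :
    ∑ s, wfun n s * v s = 0 := by
  unfold stoichSubspace at hv
  induction hv using Submodule.span_induction with
  | mem w hw =>
    obtain ⟨r, hr, rfl⟩ := hw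
    have hr' : r ∈ net n := hr
    rw [net_eq] at hr'
    simp only [Finset.mem_union, Finset.mem_image, Finset.mem_univ, true_and,
      Finset.mem_insert, Finset.mem_singleton] at hr'
    have key : pairφ (wfun n) r = 0 := by
      rcases hr' with (((((((⟨i, rfl⟩ | ⟨i, rfl⟩) | ⟨i, rfl⟩) | ⟨i, rfl⟩) | ⟨i, rfl⟩) |
        ⟨i, rfl⟩) | (rfl | rfl)) | (rfl | rfl)) <;>
        simp [fam1, fam2, fam3, fam4, fam5, fam6, inflow, outflow, pairφ_eq,
          dot_unitC, dot_pairC, wfun]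
    exact key
  | zero => simp
  | add u w _ _ hu hw =>
    simp only [Pi.add_apply, mul_add, Finset.sum_add_distrib, hu, hw, add_zero]
  | smul a u _ hu =>
    simp only [Pi.smul_apply, smul_eq_mul]
    simp_rw [mul_left_comm]
    rw [← Finset.mul_sum, hu, mul_zero]

def PSe (n : ℕ) : PS n ≃ ((Unit ⊕ Unit) ⊕ (Fin (n+1) ⊕ (Fin n ⊕ Fin n))) where
  toFun s := match s with
    | PS.E => Sum.inl (Sum.inl ())
    | PS.F => Sum.inl (Sum.inr ())
    | PS.S k => Sum.inr (Sum.inl k)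
    | PS.ES i => Sum.inr (Sum.inr (Sum.inl i))
    | PS.FS i => Sum.inr (Sum.inr (Sum.inr i))
  invFun z := match z with
    | Sum.inl (Sum.inl _) => PS.E
    | Sum.inl (Sum.inr _) => PS.F
    | Sum.inr (Sum.inl k) => PS.S k
    | Sum.inr (Sum.inr (Sum.inl i)) => PS.ES i
    | Sum.inr (Sum.inr (Sum.inr i)) => PS.FS i
  left_inv s := by cases s <;> rfl
  right_inv z := by rcases z with (⟨⟩ | ⟨⟩) | (k | (i | i)) <;> rfl

lemma sum_PS (g : PS n → ℝ) :
    ∑ s, g s = g PS.E + g PS.F + (∑ k, g (PS.S k)) + (∑ i, g (PS.ES i)) + ∑ i, g (PS.FS i) := by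
  rw [← Equiv.sum_comp (PSe n).symm g]
  simp [Fintype.sum_sum_type, PSe]
  ring


theorem main (n : ℕ) : monostationary (openOn (Pcycle n) {PS.E, PS.F}) := by
  intro κ hκ f hss hcomp hinj
  have hxP : ∀ s, 0 < f 0 s := (hss 0).1
  have hyP : ∀ s, 0 < f 1 s := (hss 1).1
  have hxSS : massAction (net n) κ (f 0) = 0 := (hss 0).2
  have hySS : massAction (net n) κ (f 1) = 0 := (hss 1).2
  set x := f 0 with hxdef
  set y := f 1 with hydef
  -- E and F coordinates agree
  have hE : x PS.E = y PS.E := by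
    have h1 := eqE κ x hxSS
    have h2 := eqE κ y hySS
    have h3 : 0 < κ (outflow (PS.E : PS n)) := hκ _ memOutE
    exact mul_left_cancel₀ (ne_of_gt h3) (h1.symm.trans h2)
  have hF : x PS.F = y PS.F := by
    have h1 := eqF κ x hxSS
    have h2 := eqF κ y hySS
    have h3 : 0 < κ (outflow (PS.F : PS n)) := hκ _ memOutF
    exact mul_left_cancel₀ (ne_of_gt h3) (h1.symm.trans h2)
  set S0 : PS n := PS.S ⟨0, Nat.succ_pos n⟩ with hS0def
  -- substrate ratios propagate
  have key : ∀ k (hk : k < n + 1), y (PS.S ⟨k, hk⟩) * x S0 = x (PS.S ⟨k, hk⟩) * y S0 := by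
    intro k
    induction k with
    | zero => intro hk; exact mul_comm _ _
    | succ k ih =>
      intro hk
      have hkn : k < n := by omega
      set j : Fin n := ⟨k, hkn⟩ with hjdef
      have hc : j.castSucc = (⟨k, by omega⟩ : Fin (n+1)) := rfl
      have hs : j.succ = (⟨k + 1, hk⟩ : Fin (n+1)) := rfl
      have e1x := eqFS κ x hxSS j
      have e2x := eqflux κ x hxSS j
      have e3x := eqES κ x hxSS j
      have e1y := eqFS κ y hySS j
      have e2y := eqflux κ y hySS j
      have e3y := eqES κ y hySS j
      rw [← hE] at e3y
      rw [← hF] at e1y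
      have Cx : (κ (fam6 j) * κ (fam4 j) * x PS.F * (κ (fam2 j) + κ (fam3 j))) *
          x (PS.S j.succ) =
          (κ (fam3 j) * κ (fam1 j) * x PS.E * (κ (fam5 j) + κ (fam6 j))) *
          x (PS.S j.castSucc) := by
        linear_combination κ (fam6 j) * (κ (fam2 j) + κ (fam3 j)) * e1x +
          (κ (fam5 j) + κ (fam6 j)) * (κ (fam2 j) + κ (fam3 j)) * e2x -
          κ (fam3 j) * (κ (fam5 j) + κ (fam6 j)) * e3x
      have Cy : (κ (fam6 j) * κ (fam4 j) * x PS.F * (κ (fam2 j) + κ (fam3 j))) *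
          y (PS.S j.succ) =
          (κ (fam3 j) * κ (fam1 j) * x PS.E * (κ (fam5 j) + κ (fam6 j))) *
          y (PS.S j.castSucc) := by
        linear_combination κ (fam6 j) * (κ (fam2 j) + κ (fam3 j)) * e1y +
          (κ (fam5 j) + κ (fam6 j)) * (κ (fam2 j) + κ (fam3 j)) * e2y -
          κ (fam3 j) * (κ (fam5 j) + κ (fam6 j)) * e3y
      have hB : (0:ℝ) < κ (fam6 j) * κ (fam4 j) * x PS.F * (κ (fam2 j) + κ (fam3 j)) := by
        have h6 := hκ _ (mem6 j)
        have h4 := hκ _ (mem4 j)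
        have h2 := hκ _ (mem2 j)
        have h3 := hκ _ (mem3 j)
        have hxF := hxP PS.F
        positivity
      have ihk := ih (by omega)
      rw [← hc] at ihk
      apply mul_left_cancel₀ (ne_of_gt hB)
      rw [show (⟨k + 1, hk⟩ : Fin (n+1)) = j.succ from hs.symm]
      linear_combination x S0 * Cy - y S0 * Cx +
        (κ (fam3 j) * κ (fam1 j) * x PS.E * (κ (fam5 j) + κ (fam6 j))) * ihk
  have keyS : ∀ k : Fin (n + 1), y (PS.S k) * x S0 = x (PS.S k) * y S0 := by
    intro k
    have := key k.val k.isLt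
    simpa using this
  have keyES : ∀ j : Fin n, y (PS.ES j) * x S0 = x (PS.ES j) * y S0 := by
    intro j
    have e3x := eqES κ x hxSS j
    have e3y := eqES κ y hySS j
    rw [← hE] at e3y
    have h2 := hκ _ (mem2 j)
    have h3 := hκ _ (mem3 j)
    have hB : (0:ℝ) < κ (fam2 j) + κ (fam3 j) := by positivity
    apply mul_left_cancel₀ (ne_of_gt hB)
    linear_combination (y S0) * e3x - (x S0) * e3y + κ (fam1 j) * x PS.E * keyS j.castSucc
  have keyFS : ∀ j : Fin n, y (PS.FS j) * x S0 = x (PS.FS j) * y S0 := by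
    intro j
    have e1x := eqFS κ x hxSS j
    have e1y := eqFS κ y hySS j
    rw [← hF] at e1y
    have h5 := hκ _ (mem5 j)
    have h6 := hκ _ (mem6 j)
    have hB : (0:ℝ) < κ (fam5 j) + κ (fam6 j) := by positivity
    apply mul_left_cancel₀ (ne_of_gt hB)
    linear_combination (y S0) * e1x - (x S0) * e1y + κ (fam4 j) * x PS.F * keyS j.succ
  -- conservation of total substrate
  have hcons := conserve (y - x) (hcomp 0 1)
  rw [sum_PS (fun s => wfun n s * (y - x) s)] at hcons
  simp only [wfun, Pi.sub_apply, zero_mul, one_mul, zero_add, add_zero] at hcons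
  set a := x S0 with hadef
  set b := y S0 with hbdef
  have ha : 0 < a := hxP S0
  set T : ℝ := (∑ k, x (PS.S k)) + (∑ i, x (PS.ES i)) + ∑ i, x (PS.FS i) with hTdef
  have hT : 0 < T := by
    have h1 : 0 < ∑ k, x (PS.S k) :=
      Finset.sum_pos (fun k _ => hxP (PS.S k)) ⟨0, Finset.mem_univ _⟩
    have h2 : 0 ≤ ∑ i, x (PS.ES i) :=
      Finset.sum_nonneg (fun i _ => le_of_lt (hxP (PS.ES i)))
    have h3 : 0 ≤ ∑ i, x (PS.FS i) :=
      Finset.sum_nonneg (fun i _ => le_of_lt (hxP (PS.FS i)))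
    rw [hTdef]; linarith
  have hmain : (b - a) * T = 0 := by
    have e1 : (∑ k, x (PS.S k)) * (b - a) = (∑ k, (y (PS.S k) - x (PS.S k))) * a := by
      rw [Finset.sum_mul, Finset.sum_mul]
      exact Finset.sum_congr rfl (fun k _ => by linear_combination -keyS k)
    have e2 : (∑ i, x (PS.ES i)) * (b - a) = (∑ i, (y (PS.ES i) - x (PS.ES i))) * a := by
      rw [Finset.sum_mul, Finset.sum_mul]
      exact Finset.sum_congr rfl (fun i _ => by linear_combination -keyES i)
    have e3 : (∑ i, x (PS.FS i)) * (b - a) = (∑ i, (y (PS.FS i) - x (PS.FS i))) * a := by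
      rw [Finset.sum_mul, Finset.sum_mul]
      exact Finset.sum_congr rfl (fun i _ => by linear_combination -keyFS i)
    have hsplit : (∑ k, (y (PS.S k) - x (PS.S k))) + (∑ i, (y (PS.ES i) - x (PS.ES i))) +
        (∑ i, (y (PS.FS i) - x (PS.FS i))) = 0 := by
      simpa [Finset.sum_sub_distrib] using hcons
    linear_combination e1 + e2 + e3 + a * hsplit
  have hba : b = a := by
    rcases mul_eq_zero.mp hmain with h | h
    · linarith
    · exact absurd h (ne_of_gt hT)
  have hxy : x = y := by
    funext s
    cases s with
    | E => exact hE
    | F => exact hF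
    | S k =>
      have := keyS k
      rw [hba] at this
      exact (mul_right_cancel₀ (ne_of_gt ha) this).symm
    | ES i =>
      have := keyES i
      rw [hba] at this
      exact (mul_right_cancel₀ (ne_of_gt ha) this).symm
    | FS i =>
      have := keyFS i
      rw [hba] at this
      exact (mul_right_cancel₀ (ne_of_gt ha) this).symm
  have : (0 : Fin 2) = 1 := hinj hxy
  simp at this

end PhosAux

/-- For every `n ≥ 1`, the semi-open network `𝒫ⁿ_{{E,F}⇌0}`, obtained
by opening both enzymes, is monostationary with mass action kinetics: for every choice of
positive rates there is at most one positive steady state in each stoichiometric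
compatibility class. -/
theorem enzyme_open_nsite_monostationary (n : ℕ) (hn : 1 ≤ n) :
    monostationary (openOn (Pcycle n) {PS.E, PS.F}) := by
  exact PhosAux.main n
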